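/- Let 0 < d < 2. Define the operator LL⁺_d on W₁(ℝ) by letting LL⁺_d(ρ) be the law of -∑_{i=1}^{D} sᵢ·log((1 - sᵢ·tanh(ηᵢ/2))/2), where D ~ Poisson(d), the sᵢ are independent uniform signs, and the ηᵢ i.i.d. with law ρ, all independent. Then LL⁺_d is a contraction for the Wasserstein-1 metric: W₁(LL⁺_d(ρ), LL⁺_d(ρ')) ≤ (d/2)·W₁(ρ, ρ') for all ρ, ρ' ∈ W₁(ℝ). -/

import Mathlib

open MeasureTheory ProbabilityTheory Real
open scoped NNReal ENNReal

/-- `γ` is a coupling of `ρ` and `ρ'`. -/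
def IsCoupling (γ : Measure (ℝ × ℝ)) (ρ ρ' : Measure ℝ) : Prop :=
  γ.map Prod.fst = ρ ∧ γ.map Prod.snd = ρ'

/-- Wasserstein-1 distance between two probability measures on `ℝ`. -/
noncomputable def W1 (ρ ρ' : Measure ℝ) : ℝ≥0∞ :=
  ⨅ (γ : Measure (ℝ × ℝ)) (_ : IsProbabilityMeasure γ) (_ : IsCoupling γ ρ ρ'),
    ∫⁻ p, ENNReal.ofReal |p.1 - p.2| ∂γ

/-- Codomain family: one `ℕ`-valued variable (the Poisson count) and, for each `n : ℕ`,
two real variables `ηₙ, sₙ`. -/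
abbrev llpCod : Unit ⊕ (ℕ × Fin 2) → Type := Sum.elim (fun _ => ℕ) (fun _ => ℝ)

def llpMS : ∀ i : Unit ⊕ (ℕ × Fin 2), MeasurableSpace (llpCod i)
  | Sum.inl _ => (inferInstance : MeasurableSpace ℕ)
  | Sum.inr _ => (inferInstance : MeasurableSpace ℝ)

def llpFam {Ω : Type*} (D : Ω → ℕ) (η s : ℕ → Ω → ℝ) :
    ∀ i : Unit ⊕ (ℕ × Fin 2), Ω → llpCod i
  | Sum.inl _ => D
  | Sum.inr (n, j) => if j = 0 then η n else s n

/-- The uniform distribution on the two signs `{±1} ⊆ ℝ`. -/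
noncomputable def signLaw : Measure ℝ :=
  (1 / 2 : ℝ≥0∞) • Measure.dirac (1 : ℝ) + (1 / 2 : ℝ≥0∞) • Measure.dirac (-1 : ℝ)

/-- On `(Ω, P)`: `D` is Poisson(`d`), the `sₙ` are uniform signs, the `ηₙ` are i.i.d. with
law `ρ`, all mutually independent; then
`P.map (-∑_{i<D} sᵢ · log((1 - sᵢ·tanh(ηᵢ/2))/2))` realizes `LL⁺_d(ρ)`. -/
structure IsLLpSetup {Ω : Type*} [MeasurableSpace Ω] (P : Measure Ω) (d : ℝ≥0)
    (ρ : Measure ℝ) (D : Ω → ℕ) (η s : ℕ → Ω → ℝ) : Prop where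
  probMeas : IsProbabilityMeasure P
  measD : Measurable D
  measη : ∀ n, Measurable (η n)
  meass : ∀ n, Measurable (s n)
  lawD : P.map D = (poissonPMF d).toMeasure
  lawη : ∀ n, P.map (η n) = ρ
  laws : ∀ n, P.map (s n) = signLaw
  indep : iIndepFun (m := llpMS) (llpFam D η s) P

/-!
Couple the two inputs by an arbitrary coupling `γ` of `ρ` and `ρ'`, and use the same Poisson
count and the same signs on both sides. With `σ` the sigmoid, `(1 - u tanh (x/2)) / 2 = σ (-u x)`
for `u = ±1`, so the summand is `-log σ (-η)` or `log σ η` according to the sign. Both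
`x ↦ log σ (±x)` are monotone and `log σ x - log σ (-x) = x`, hence
`|log σ x - log σ y| + |log σ (-x) - log σ (-y)| = |x - y|`: averaged over the sign, coupled
summands differ by `|η - η'| / 2`. By the triangle inequality the coupled sums of `D` summands
differ by at most the sum of these, and `E D = d`, so the resulting coupling of the two outputs
costs `(d / 2) E_γ |η - η'|`.
-/
noncomputable def llpSummand (x u : ℝ) : ℝ := -(u * log ((1 - u * tanh (x / 2)) / 2))

lemma one_add_tanh_half_div_two (x : ℝ) : (1 + tanh (x / 2)) / 2 = sigmoid x := by
  have hx : exp (-x) = (exp (x / 2))⁻¹ ^ 2 := by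
    rw [← exp_neg, ← exp_nat_mul]; ring_nf
  rw [sigmoid_def, hx, tanh_eq_sinh_div_cosh, sinh_eq, cosh_eq, exp_neg]
  field_simp
  ring

lemma log_sigmoid_sub_log_sigmoid_neg (x : ℝ) : log (sigmoid x) - log (sigmoid (-x)) = x := by
  rw [← sigmoid_mul_rexp_neg, log_mul (sigmoid_pos x).ne' (exp_pos _).ne', log_exp]
  ring

lemma monotone_log_sigmoid : Monotone fun x => log (sigmoid x) :=
  fun _ _ h => log_le_log (sigmoid_pos _) (sigmoid_le h)

lemma abs_log_sigmoid_sub_add_abs_log_sigmoid_neg_sub (x y : ℝ) :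
    |log (sigmoid x) - log (sigmoid y)| + |log (sigmoid (-x)) - log (sigmoid (-y))| = |x - y| := by
  wlog h : x ≤ y generalizing x y
  · simpa only [abs_sub_comm] using this y x (le_of_not_ge h)
  have h₁ := monotone_log_sigmoid h
  have h₂ := monotone_log_sigmoid (neg_le_neg h)
  have hx := log_sigmoid_sub_log_sigmoid_neg x
  have hy := log_sigmoid_sub_log_sigmoid_neg y
  rw [abs_of_nonpos (by linarith), abs_of_nonneg (by linarith), abs_of_nonpos (by linarith)]
  linarith

lemma llpSummand_one (x : ℝ) : llpSummand x 1 = -log (sigmoid (-x)) := by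
  rw [llpSummand, ← one_add_tanh_half_div_two, neg_div, tanh_neg]
  ring_nf

lemma llpSummand_neg_one (x : ℝ) : llpSummand x (-1) = log (sigmoid x) := by
  rw [llpSummand, ← one_add_tanh_half_div_two]
  ring_nf

lemma abs_llpSummand_sub_add_abs_llpSummand_sub (x y : ℝ) :
    |llpSummand x 1 - llpSummand y 1| + |llpSummand x (-1) - llpSummand y (-1)| = |x - y| := by
  rw [llpSummand_one, llpSummand_one, llpSummand_neg_one, llpSummand_neg_one, neg_sub_neg,
    abs_sub_comm, add_comm]
  exact abs_log_sigmoid_sub_add_abs_log_sigmoid_neg_sub x y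

@[fun_prop]
lemma measurable_tanh : Measurable tanh := by
  rw [show tanh = fun x => sinh x / cosh x from funext tanh_eq_sinh_div_cosh]
  fun_prop

lemma measurable_llpSummand : Measurable fun p : ℝ × ℝ => llpSummand p.1 p.2 := by
  unfold llpSummand
  fun_prop

instance : IsProbabilityMeasure signLaw :=
  ⟨by simp [signLaw, ENNReal.inv_two_add_inv_two]⟩

lemma lintegral_signLaw (f : ℝ → ℝ≥0∞) :
    ∫⁻ u, f u ∂signLaw = 2⁻¹ * f 1 + 2⁻¹ * f (-1) := by
  rw [signLaw, lintegral_add_measure, lintegral_smul_measure, lintegral_smul_measure,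
    lintegral_dirac, lintegral_dirac, one_div, smul_eq_mul, smul_eq_mul]

lemma poissonPMF_toMeasure (d : ℝ≥0) : (poissonPMF d).toMeasure = poissonMeasure d :=
  Measure.ext_of_singleton fun n => by
    rw [PMF.toMeasure_apply_singleton _ _ (measurableSet_singleton n), poissonMeasure_singleton]
    rfl

lemma tsum_poissonMeasure_singleton (d : ℝ≥0) : ∑' n : ℕ, poissonMeasure d {n} = 1 := by
  simpa using Measure.tsum_indicator_apply_singleton (poissonMeasure d) Set.univ .univ

lemma tsum_mul_poissonMeasure_singleton (d : ℝ≥0) :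
    ∑' n : ℕ, (n : ℝ≥0∞) * poissonMeasure d {n} = d := by
  have hshift : ∀ m : ℕ, ((m + 1 : ℕ) : ℝ≥0∞) * poissonMeasure d {m + 1}
      = d * poissonMeasure d {m} := by
    intro m
    rw [poissonMeasure_singleton, poissonMeasure_singleton, ← ENNReal.ofReal_natCast,
      ← ENNReal.ofReal_coe_nnreal, ← ENNReal.ofReal_mul (by positivity),
      ← ENNReal.ofReal_mul (by positivity), Nat.factorial_succ]
    congr 1
    push_cast
    field_simp
    ring
  rw [tsum_eq_zero_add' ENNReal.summable, Nat.cast_zero, zero_mul, zero_add, tsum_congr hshift,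
    ENNReal.tsum_mul_left, tsum_poissonMeasure_singleton, mul_one]

section PoissonSum

variable {E F : Type*} [MeasurableSpace E] [AddCommMonoid E]

/-- The compound Poisson law: the law of `∑_{i<N} Xᵢ` for `N ∼ Poisson(d)` independent of the
i.i.d. `Xᵢ ∼ μ`. -/
noncomputable def poissonSum (d : ℝ≥0) (μ : Measure E) : Measure E :=
  Measure.sum fun n : ℕ =>
    poissonMeasure d {n} • (Measure.pi fun _ : Fin n => μ).map fun v => ∑ i, v i

variable [MeasurableAdd₂ E] [MeasurableSpace F] [AddCommMonoid F] [MeasurableAdd₂ F]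

lemma measurable_sum_fin (n : ℕ) : Measurable fun v : Fin n → E => ∑ i, v i :=
  Finset.measurable_sum _ fun i _ => measurable_pi_apply i

instance (d : ℝ≥0) (μ : Measure E) [IsProbabilityMeasure μ] :
    IsProbabilityMeasure (poissonSum d μ) := by
  constructor
  simp only [poissonSum, Measure.sum_apply _ MeasurableSet.univ, Measure.smul_apply,
    Measure.map_apply (measurable_sum_fin _) MeasurableSet.univ, Set.preimage_univ,
    measure_univ, smul_eq_mul, mul_one]
  exact tsum_poissonMeasure_singleton d

lemma map_sum_range_eq_poissonSum {d : ℝ≥0} {μ : Measure E} [SigmaFinite μ] {Ω : Type*}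
    [MeasurableSpace Ω] {P : Measure Ω} {N : Ω → ℕ} {Y : ℕ → Ω → E} (hN : Measurable N)
    (hY : ∀ i, Measurable (Y i))
    (hlaw : ∀ n : ℕ, P.map (fun ω => (N ω, fun i : Fin n => Y i ω))
      = (poissonMeasure d).prod (Measure.pi fun _ => μ)) :
    P.map (fun ω => ∑ i ∈ Finset.range (N ω), Y i ω) = poissonSum d μ := by
  have hW : ∀ n : ℕ, Measurable fun ω => (N ω, fun i : Fin n => Y i ω) := fun n => by fun_prop
  have hF : Measurable fun ω => ∑ i ∈ Finset.range (N ω), Y i ω :=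
    (measurable_from_prod_countable_left (f := fun p : Ω × ℕ => ∑ i ∈ Finset.range p.2, Y i p.1)
      fun n => Finset.measurable_sum (Finset.range n) fun i _ => hY i).comp
      (measurable_id.prodMk hN)
  ext A hA
  have hslice : ∀ n : ℕ, (fun ω => ∑ i ∈ Finset.range (N ω), Y i ω) ⁻¹' A ∩ N ⁻¹' {n}
      = (fun ω => (N ω, fun i : Fin n => Y i ω)) ⁻¹' ({n} ×ˢ ((fun v => ∑ i, v i) ⁻¹' A)) := by
    intro n
    ext ω
    simp only [Set.mem_inter_iff, Set.mem_preimage, Set.mem_singleton_iff, Set.mem_prod]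
    constructor
    · rintro ⟨h, rfl⟩
      exact ⟨rfl, by rwa [← Finset.sum_range fun i => Y i ω]⟩
    · rintro ⟨hn, h⟩
      exact ⟨by rwa [hn, Finset.sum_range fun i => Y i ω], hn⟩
  have hunion : (fun ω => ∑ i ∈ Finset.range (N ω), Y i ω) ⁻¹' A
      = ⋃ n : ℕ, (fun ω => ∑ i ∈ Finset.range (N ω), Y i ω) ⁻¹' A ∩ N ⁻¹' {n} := by
    ext ω
    simp
  rw [Measure.map_apply hF hA, poissonSum, Measure.sum_apply _ hA, hunion,
    measure_iUnion ((pairwise_disjoint_fiber N).mono fun m n h =>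
      h.mono Set.inter_subset_right Set.inter_subset_right)
      fun n => (hF hA).inter (hN (measurableSet_singleton n))]
  refine tsum_congr fun n => ?_
  rw [hslice, ← Measure.map_apply (hW n) ((measurableSet_singleton n).prod
      (measurable_sum_fin n hA)), hlaw, Measure.prod_prod, Measure.smul_apply, smul_eq_mul,
    Measure.map_apply (measurable_sum_fin n) hA]

variable {d : ℝ≥0} {μ : Measure E} [IsProbabilityMeasure μ]

lemma map_poissonSum (L : E →+ F) (hL : Measurable L) :
    (poissonSum d μ).map L = poissonSum d (μ.map L) := by
  have := Measure.isProbabilityMeasure_map (μ := μ) hL.aemeasurable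
  rw [poissonSum, Measure.map_sum hL.aemeasurable]
  congr 1
  funext n
  have hsum : L ∘ (fun v : Fin n → E => ∑ i, v i) = (fun v => ∑ i, v i) ∘ fun v i => L (v i) := by
    ext v
    simp
  rw [Measure.map_smul, Measure.map_map hL (measurable_sum_fin n), hsum,
    ← Measure.map_map (measurable_sum_fin n) (by fun_prop),
    Measure.pi_map_pi fun _ => hL.aemeasurable]

section Subadditive

variable {f : E → ℝ≥0∞} (hf : Measurable f) (h0 : f 0 = 0) (hadd : ∀ x y, f (x + y) ≤ f x + f y)
include hf h0 hadd

lemma lintegral_map_sum_pi_le (n : ℕ) :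
    ∫⁻ x, f x ∂(Measure.pi fun _ : Fin n => μ).map (fun v => ∑ i, v i) ≤ n * ∫⁻ x, f x ∂μ := by
  rw [lintegral_map hf (measurable_sum_fin n)]
  calc ∫⁻ v, f (∑ i, v i) ∂Measure.pi (fun _ : Fin n => μ)
      ≤ ∫⁻ v, ∑ i, f (v i) ∂Measure.pi (fun _ : Fin n => μ) :=
        lintegral_mono fun v => Finset.le_sum_of_subadditive f h0.le hadd _ _
    _ = ∑ i, ∫⁻ v, f (v i) ∂Measure.pi (fun _ : Fin n => μ) :=
        lintegral_finsetSum _ fun i _ => hf.comp (measurable_pi_apply i)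
    _ = n * ∫⁻ x, f x ∂μ := by
        simp [(measurePreserving_eval (fun _ : Fin n => μ) _).lintegral_comp hf]

lemma lintegral_poissonSum_le : ∫⁻ x, f x ∂poissonSum d μ ≤ d * ∫⁻ x, f x ∂μ := by
  rw [poissonSum, lintegral_sum_measure]
  calc ∑' n : ℕ, ∫⁻ x, f x ∂(poissonMeasure d {n} •
        (Measure.pi fun _ : Fin n => μ).map fun v => ∑ i, v i)
      ≤ ∑' n : ℕ, poissonMeasure d {n} * (n * ∫⁻ x, f x ∂μ) := by
        simp only [lintegral_smul_measure, smul_eq_mul]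
        exact ENNReal.tsum_le_tsum fun n =>
          mul_le_mul_right (lintegral_map_sum_pi_le hf h0 hadd n) _
    _ = d * ∫⁻ x, f x ∂μ := by
        simp_rw [← mul_assoc, mul_comm (poissonMeasure d _)]
        rw [ENNReal.tsum_mul_right, tsum_mul_poissonMeasure_singleton]

end Subadditive

end PoissonSum

lemma pi_map_pairs {ι α : Type*} [Fintype ι] [MeasurableSpace α] (μ ν : Measure α)
    [IsProbabilityMeasure μ] [IsProbabilityMeasure ν] :
    (Measure.pi fun p : ι × Fin 2 => ![μ, ν] p.2).map (fun x i => (x (i, 0), x (i, 1)))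
      = Measure.pi fun _ : ι => μ.prod ν := by
  have : ∀ j, IsProbabilityMeasure (![μ, ν] j) := fun j => by fin_cases j <;> assumption
  have hcurry :
      (Measure.pi fun p : ι × Fin 2 => ![μ, ν] p.2).map (MeasurableEquiv.curry ι (Fin 2) α)
        = Measure.pi fun _ : ι => Measure.pi ![μ, ν] := by
    simpa only [Measure.infinitePi_eq_pi] using
      Measure.infinitePi_map_curry (fun (_ : ι) (j : Fin 2) => ![μ, ν] j)
  have hsplit : (fun (x : ι × Fin 2 → α) i => (x (i, 0), x (i, 1)))
      = (fun y i => MeasurableEquiv.finTwoArrow (y i)) ∘ MeasurableEquiv.curry ι (Fin 2) α := rfl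
  rw [hsplit, ← Measure.map_map (by fun_prop) (MeasurableEquiv.measurable _), hcurry,
    Measure.pi_map_pi fun _ => (MeasurableEquiv.measurable _).aemeasurable,
    (measurePreserving_finTwoArrow_vec μ ν).map_eq]

noncomputable def llpStep (ρ : Measure ℝ) : Measure ℝ :=
  (ρ.prod signLaw).map fun p => llpSummand p.1 p.2

instance (ρ : Measure ℝ) [IsProbabilityMeasure ρ] : IsProbabilityMeasure (llpStep ρ) :=
  Measure.isProbabilityMeasure_map measurable_llpSummand.aemeasurable

namespace IsLLpSetup

attribute [local instance] llpMS

variable {Ω : Type*} [MeasurableSpace Ω] {P : Measure Ω} {d : ℝ≥0} {ρ : Measure ℝ}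
  {D : Ω → ℕ} {η s : ℕ → Ω → ℝ}

lemma measurable_llpFam (hst : IsLLpSetup P d ρ D η s) :
    ∀ i, Measurable (llpFam D η s i)
  | Sum.inl _ => hst.measD
  | Sum.inr (k, j) => by
    show Measurable (if j = 0 then η k else s k)
    split_ifs
    exacts [hst.measη k, hst.meass k]

lemma map_count_pairs (hst : IsLLpSetup P d ρ D η s) [IsProbabilityMeasure ρ] (n : ℕ) :
    P.map (fun ω => (D ω, fun i : Fin n => (η i ω, s i ω)))
      = (poissonMeasure d).prod (Measure.pi fun _ => ρ.prod signLaw) := by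
  have := hst.probMeas
  -- Independence, restricted to the finitely many variables `D, η₀, s₀, …, ηₙ₋₁, sₙ₋₁`, makes
  -- their joint law a finite product measure.
  let g : Unit ⊕ Fin n × Fin 2 → Unit ⊕ ℕ × Fin 2 := Sum.map id fun p => ((p.1 : ℕ), p.2)
  have hg : g.Injective := Sum.map_injective.2 ⟨Function.injective_id, fun p q h => by
    simp only [Prod.mk.injEq] at h
    exact Prod.ext (Fin.ext h.1) h.2⟩
  have hjoint : MeasurePreserving (fun ω i => llpFam D η s (g i) ω) P
      (Measure.pi fun i => P.map (llpFam D η s (g i))) :=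
    ⟨measurable_pi_lambda _ fun i => hst.measurable_llpFam (g i),
      (hst.indep.precomp hg).map_fun_eq_pi_map fun i => (hst.measurable_llpFam (g i)).aemeasurable⟩
  have hcount : P.map (llpFam D η s (g (Sum.inl ()))) = poissonMeasure d :=
    hst.lawD.trans (poissonPMF_toMeasure d)
  have hcoord : (fun p : Fin n × Fin 2 => P.map (llpFam D η s (g (Sum.inr p))))
      = fun p => ![ρ, signLaw] p.2 := by
    funext ⟨k, j⟩
    fin_cases j
    exacts [hst.lawη k, hst.laws k]
  have hsplit := measurePreserving_sumPiEquivProdPi fun i => P.map (llpFam D η s (g i))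
  rw [hcoord] at hsplit
  have hfirst := measurePreserving_piUnique fun u : Unit => P.map (llpFam D η s (g (Sum.inl u)))
  rw [hcount] at hfirst
  have hsecond : MeasurePreserving (fun (b : Fin n × Fin 2 → ℝ) k => (b (k, 0), b (k, 1)))
      (Measure.pi fun p : Fin n × Fin 2 => ![ρ, signLaw] p.2)
      (Measure.pi fun _ => ρ.prod signLaw) :=
    ⟨by fun_prop, pi_map_pairs ρ signLaw⟩
  have : ∀ j, IsProbabilityMeasure (![ρ, signLaw] j) := Fin.forall_fin_two.2
    ⟨inferInstanceAs (IsProbabilityMeasure ρ), inferInstanceAs (IsProbabilityMeasure signLaw)⟩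
  exact ((hfirst.prod hsecond).comp hsplit).comp hjoint |>.map_eq

lemma map_eq_poissonSum (hst : IsLLpSetup P d ρ D η s) [IsProbabilityMeasure ρ] :
    P.map (fun ω => -∑ i ∈ Finset.range (D ω),
        s i ω * log ((1 - s i ω * tanh (η i ω / 2)) / 2))
      = poissonSum d (llpStep ρ) := by
  have := hst.probMeas
  simp_rw [← Finset.sum_neg_distrib]
  refine map_sum_range_eq_poissonSum (Y := fun i ω => llpSummand (η i ω) (s i ω)) hst.measD
    (fun i => measurable_llpSummand.comp ((hst.measη i).prodMk (hst.meass i))) fun n => ?_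
  have hpairs : Measurable fun ω => (D ω, fun i : Fin n => (η i ω, s i ω)) :=
    hst.measD.prodMk (measurable_pi_lambda _ fun i => (hst.measη i).prodMk (hst.meass i))
  have hsummands : Measurable fun v : Fin n → ℝ × ℝ => fun i => llpSummand (v i).1 (v i).2 :=
    measurable_pi_lambda _ fun i => measurable_llpSummand.comp (measurable_pi_apply i)
  rw [show (fun ω => (D ω, fun i : Fin n => llpSummand (η i ω) (s i ω)))
      = Prod.map id (fun v i => llpSummand (v i).1 (v i).2) ∘
          fun ω => (D ω, fun i : Fin n => (η i ω, s i ω)) from rfl,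
    ← Measure.map_map (measurable_id.prodMap hsummands) hpairs, hst.map_count_pairs n,
    ← Measure.map_prod_map _ _ measurable_id hsummands, Measure.map_id,
    Measure.pi_map_pi fun _ => measurable_llpSummand.aemeasurable, llpStep]

end IsLLpSetup

noncomputable def llpStepCoupled (γ : Measure (ℝ × ℝ)) : Measure (ℝ × ℝ) :=
  (γ.prod signLaw).map fun q => (llpSummand q.1.1 q.2, llpSummand q.1.2 q.2)

lemma measurable_llpSummand_pair :
    Measurable fun q : (ℝ × ℝ) × ℝ => (llpSummand q.1.1 q.2, llpSummand q.1.2 q.2) :=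
  (measurable_llpSummand.comp (measurable_fst.fst.prodMk measurable_snd)).prodMk
    (measurable_llpSummand.comp (measurable_fst.snd.prodMk measurable_snd))

lemma map_fst_llpStepCoupled (γ : Measure (ℝ × ℝ)) [SFinite γ] :
    (llpStepCoupled γ).map Prod.fst = llpStep (γ.map Prod.fst) := by
  have h := Measure.map_prod_map γ signLaw measurable_fst measurable_id
  rw [Measure.map_id] at h
  rw [llpStepCoupled, Measure.map_map measurable_fst measurable_llpSummand_pair, llpStep, h,
    Measure.map_map measurable_llpSummand (measurable_fst.prodMap measurable_id)]
  rfl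

lemma map_snd_llpStepCoupled (γ : Measure (ℝ × ℝ)) [SFinite γ] :
    (llpStepCoupled γ).map Prod.snd = llpStep (γ.map Prod.snd) := by
  have h := Measure.map_prod_map γ signLaw measurable_snd measurable_id
  rw [Measure.map_id] at h
  rw [llpStepCoupled, Measure.map_map measurable_snd measurable_llpSummand_pair, llpStep, h,
    Measure.map_map measurable_llpSummand (measurable_snd.prodMap measurable_id)]
  rfl

lemma lintegral_abs_sub_llpStepCoupled (γ : Measure (ℝ × ℝ)) :
    ∫⁻ p, ENNReal.ofReal |p.1 - p.2| ∂llpStepCoupled γ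
      = 2⁻¹ * ∫⁻ p, ENNReal.ofReal |p.1 - p.2| ∂γ := by
  have hcost : Measurable fun p : ℝ × ℝ => ENNReal.ofReal |p.1 - p.2| := by fun_prop
  rw [llpStepCoupled, lintegral_map hcost measurable_llpSummand_pair, lintegral_prod,
    ← lintegral_const_mul _ hcost]
  swap
  · exact (hcost.comp measurable_llpSummand_pair).aemeasurable
  refine lintegral_congr fun p => ?_
  rw [lintegral_signLaw, ← mul_add, ← ENNReal.ofReal_add (abs_nonneg _) (abs_nonneg _),
    abs_llpSummand_sub_add_abs_llpSummand_sub]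

instance (γ : Measure (ℝ × ℝ)) [IsProbabilityMeasure γ] :
    IsProbabilityMeasure (llpStepCoupled γ) :=
  Measure.isProbabilityMeasure_map measurable_llpSummand_pair.aemeasurable

lemma W1_le_lintegral {μ ν : Measure ℝ} (γ : Measure (ℝ × ℝ)) [IsProbabilityMeasure γ]
    (hγ : IsCoupling γ μ ν) : W1 μ ν ≤ ∫⁻ p, ENNReal.ofReal |p.1 - p.2| ∂γ :=
  iInf₂_le_of_le γ ‹_› (iInf_le _ hγ)

lemma W1_le_mul_of_forall_isCoupling {μ ν ρ ρ' : Measure ℝ} {c : ℝ≥0∞} (hc₀ : c ≠ 0) (hc : c ≠ ∞)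
    (h : ∀ γ, IsProbabilityMeasure γ → IsCoupling γ ρ ρ' →
      W1 μ ν ≤ c * ∫⁻ p, ENNReal.ofReal |p.1 - p.2| ∂γ) :
    W1 μ ν ≤ c * W1 ρ ρ' := by
  conv_rhs => rw [W1]
  simp only [ENNReal.mul_iInf_of_ne hc₀ hc]
  exact le_iInf₂ fun γ hγ => le_iInf (h γ hγ)

lemma isCoupling_poissonSum_llpStepCoupled {d : ℝ≥0} {ρ ρ' : Measure ℝ}
    {γ : Measure (ℝ × ℝ)} [IsProbabilityMeasure γ] (hγ : IsCoupling γ ρ ρ') :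
    IsCoupling (poissonSum d (llpStepCoupled γ)) (poissonSum d (llpStep ρ))
      (poissonSum d (llpStep ρ')) :=
  ⟨(map_poissonSum (AddMonoidHom.fst ℝ ℝ) measurable_fst).trans <| by
      rw [AddMonoidHom.coe_fst, map_fst_llpStepCoupled, hγ.1],
    (map_poissonSum (AddMonoidHom.snd ℝ ℝ) measurable_snd).trans <| by
      rw [AddMonoidHom.coe_snd, map_snd_llpStepCoupled, hγ.2]⟩

lemma ofReal_abs_sub_add_le (x y : ℝ × ℝ) :
    ENNReal.ofReal |(x + y).1 - (x + y).2|
      ≤ ENNReal.ofReal |x.1 - x.2| + ENNReal.ofReal |y.1 - y.2| := by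
  rw [← ENNReal.ofReal_add (abs_nonneg _) (abs_nonneg _)]
  refine ENNReal.ofReal_le_ofReal ?_
  rw [Prod.fst_add, Prod.snd_add, add_sub_add_comm]
  exact abs_add_le _ _

lemma W1_poissonSum_llpStep_le {d : ℝ≥0} (hd : d ≠ 0) (ρ ρ' : Measure ℝ) :
    W1 (poissonSum d (llpStep ρ)) (poissonSum d (llpStep ρ')) ≤ (d : ℝ≥0∞) / 2 * W1 ρ ρ' := by
  refine W1_le_mul_of_forall_isCoupling (by simpa using hd)
    (ENNReal.div_ne_top ENNReal.coe_ne_top two_ne_zero) fun γ _ hγ => ?_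
  calc W1 (poissonSum d (llpStep ρ)) (poissonSum d (llpStep ρ'))
      ≤ ∫⁻ p, ENNReal.ofReal |p.1 - p.2| ∂poissonSum d (llpStepCoupled γ) :=
        W1_le_lintegral _ (isCoupling_poissonSum_llpStepCoupled hγ)
    _ ≤ d * ∫⁻ p, ENNReal.ofReal |p.1 - p.2| ∂llpStepCoupled γ :=
        lintegral_poissonSum_le (by fun_prop) (by simp) ofReal_abs_sub_add_le
    _ = (d : ℝ≥0∞) / 2 * ∫⁻ p, ENNReal.ofReal |p.1 - p.2| ∂γ := by
        rw [lintegral_abs_sub_llpStepCoupled, ← mul_assoc, div_eq_mul_inv]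

theorem stmt_9_general (d : ℝ≥0) (hd0 : 0 < d)
    (ρ ρ' : Measure ℝ) [IsProbabilityMeasure ρ] [IsProbabilityMeasure ρ']
    {Ω Ω' : Type*} [MeasurableSpace Ω] [MeasurableSpace Ω']
    (P : Measure Ω) (P' : Measure Ω')
    (D : Ω → ℕ) (η s : ℕ → Ω → ℝ) (D' : Ω' → ℕ) (η' t : ℕ → Ω' → ℝ)
    (hset : IsLLpSetup P d ρ D η s) (hset' : IsLLpSetup P' d ρ' D' η' t) :
    W1
      (P.map (fun ω => -∑ i ∈ Finset.range (D ω),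
        s i ω * Real.log ((1 - s i ω * Real.tanh (η i ω / 2)) / 2)))
      (P'.map (fun ω => -∑ i ∈ Finset.range (D' ω),
        t i ω * Real.log ((1 - t i ω * Real.tanh (η' i ω / 2)) / 2))) ≤
      ((d : ℝ≥0∞) / 2) * W1 ρ ρ' := by
  rw [hset.map_eq_poissonSum, hset'.map_eq_poissonSum]
  exact W1_poissonSum_llpStep_le hd0.ne' ρ ρ'

/-- For `0 < d < 2`, the operator `LL⁺_d` is a contraction for the Wasserstein-1 metric:
`W₁(LL⁺_d ρ, LL⁺_d ρ') ≤ (d/2)·W₁(ρ, ρ')`. -/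
theorem stmt_9 (d : ℝ≥0) (hd0 : 0 < d) (hd2 : (d : ℝ) < 2)
    (ρ ρ' : Measure ℝ) [IsProbabilityMeasure ρ] [IsProbabilityMeasure ρ']
    (hρ : ∫⁻ x, ENNReal.ofReal |x| ∂ρ < ∞)
    (hρ' : ∫⁻ x, ENNReal.ofReal |x| ∂ρ' < ∞)
    {Ω Ω' : Type*} [MeasurableSpace Ω] [MeasurableSpace Ω']
    (P : Measure Ω) (P' : Measure Ω')
    (D : Ω → ℕ) (η s : ℕ → Ω → ℝ) (D' : Ω' → ℕ) (η' t : ℕ → Ω' → ℝ)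
    (hset : IsLLpSetup P d ρ D η s) (hset' : IsLLpSetup P' d ρ' D' η' t) :
    W1
      (P.map (fun ω => -∑ i ∈ Finset.range (D ω),
        s i ω * Real.log ((1 - s i ω * Real.tanh (η i ω / 2)) / 2)))
      (P'.map (fun ω => -∑ i ∈ Finset.range (D' ω),
        t i ω * Real.log ((1 - t i ω * Real.tanh (η' i ω / 2)) / 2))) ≤
      ((d : ℝ≥0∞) / 2) * W1 ρ ρ' :=
  stmt_9_general d hd0 ρ ρ' P P' D η s D' η' t hset hset'
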